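/- arXiv:1606.07362 — 4 statements merged into one kernel-verified Lean document; each statement's English description precedes it below -/
import Mathlib

section
/- If G is a game under misère play such that o⁻(G + X) = o⁻(X) for all games X (i.e., G is equivalent to 0 in the universe of all games), then G is identical to the zero game {·|·}. -/
namespace SetTheory

universe u

/-- Pre-games, as in the older Mathlib (`SetTheory.PGame`), removed since. -/
inductive PGame : Type (u + 1)
  | mk : ∀ α β : Type u, (α → PGame) → (β → PGame) → PGame

namespace PGame

/-- The indexing type for allowable moves by Left. -/
def LeftMoves : PGame → Type u
  | mk l _ _ _ => l

/-- The indexing type for allowable moves by Right. -/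
def RightMoves : PGame → Type u
  | mk _ r _ _ => r

/-- The new game after Left makes an allowed move. -/
def moveLeft : ∀ g : PGame, LeftMoves g → PGame
  | mk _l _ L _ => L

/-- The new game after Right makes an allowed move. -/
def moveRight : ∀ g : PGame, RightMoves g → PGame
  | mk _ _r _ R => R

/-- `IsOption x y` means that `x` is either a left or right option for `y`. -/
inductive IsOption : PGame → PGame → Prop
  | moveLeft {x : PGame} (i : x.LeftMoves) : IsOption (x.moveLeft i) x
  | moveRight {x : PGame} (i : x.RightMoves) : IsOption (x.moveRight i) x

/-- `Subsequent x y` says that `x` can be obtained by playing some nonempty sequence of moves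
from `y`. -/
def Subsequent : PGame → PGame → Prop :=
  Relation.TransGen IsOption

/-- The sum of `x = {xL | xR}` and `y = {yL | yR}` is `{xL + y, x + yL | xR + y, x + yR}`. -/
noncomputable instance : Add PGame.{u} :=
  ⟨fun x y => by
    induction x generalizing y with | mk xl xr _ _ IHxl IHxr => _
    induction y with | mk yl yr yL yR IHyl IHyr => _
    have y := mk yl yr yL yR
    refine ⟨xl ⊕ yl, xr ⊕ yr, Sum.rec ?_ ?_, Sum.rec ?_ ?_⟩
    · exact fun i => IHxl i y
    · exact IHyl
    · exact fun i => IHxr i y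
    · exact IHyr⟩

end PGame

end SetTheory

open SetTheory

namespace Misere

/-- Misère winning: `(wins G).1` means Left, moving first on `G`, wins under misère play;
`(wins G).2` means Right, moving first, wins. The player unable to move wins. -/
def wins : PGame → Prop × Prop
  | ⟨α, β, L, R⟩ =>
    (IsEmpty α ∨ ∃ i, ¬ (wins (L i)).2,
     IsEmpty β ∨ ∃ j, ¬ (wins (R j)).1)

/-- Left wins moving first under misère play. -/
def LeftFirst (G : PGame) : Prop := (wins G).1

/-- Right wins moving first under misère play. -/
def RightFirst (G : PGame) : Prop := (wins G).2

/-- Normal-play winning: `(nwins G).1` means Left moving first wins (player unable to move loses). -/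
def nwins : PGame → Prop × Prop
  | ⟨α, β, L, R⟩ =>
    (∃ i, ¬ (nwins (L i)).2,
     ∃ j, ¬ (nwins (R j)).1)

/-- Outcome classes. -/
inductive Outcome : Type
  | L | R | N | P
  deriving DecidableEq

/-- The partial order on outcomes: L > P > R, L > N > R, with P and N incomparable. -/
instance : LE Outcome := ⟨fun a b => a = b ∨ a = .R ∨ b = .L⟩

open Classical in
/-- The misère outcome of a game. -/
noncomputable def misereOutcome (G : PGame) : Outcome :=
  if (wins G).1 then (if (wins G).2 then .N else .L)
  else (if (wins G).2 then .R else .P)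

open Classical in
/-- The normal-play outcome of a game. -/
noncomputable def normalOutcome (G : PGame) : Outcome :=
  if (nwins G).1 then (if (nwins G).2 then .N else .L)
  else (if (nwins G).2 then .R else .P)

/-- A game is dicot if every subposition has a Left option iff it has a Right option. -/
def Dicot : PGame → Prop
  | ⟨α, β, L, R⟩ => (IsEmpty α ↔ IsEmpty β) ∧ (∀ i, Dicot (L i)) ∧ (∀ j, Dicot (R j))

/-- A dead Left end: a Left end all of whose followers are Left ends. -/
def DeadLeftEnd : PGame → Prop
  | ⟨α, _β, _L, R⟩ => IsEmpty α ∧ ∀ j, DeadLeftEnd (R j)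

/-- A dead Right end: a Right end all of whose followers are Right ends. -/
def DeadRightEnd : PGame → Prop
  | ⟨_α, β, L, _R⟩ => IsEmpty β ∧ ∀ i, DeadRightEnd (L i)

/-- A follower of `G` is any position reachable from `G`, including `G` itself. -/
def Follower (H G : PGame) : Prop := H = G ∨ PGame.Subsequent H G

/-- An end: a position where some player has no move. -/
def IsEnd (G : PGame) : Prop := IsEmpty G.LeftMoves ∨ IsEmpty G.RightMoves

/-- A game is dead-ending if every one of its end followers is a dead end. -/
def DeadEnding (G : PGame) : Prop :=
  ∀ H, Follower H G → IsEnd H → (DeadLeftEnd H ∨ DeadRightEnd H)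

end Misere

/-!
The misère adjoint `G°` (Siegel) is built so that `G + G°` is a P-position: every move in one
component is answered by the mirror move in the other, and a move to the extra option `0` that `G°`
has at an end of `G` leaves the opponent without a move in the sum, which is a win for them.

If `G` has a Left option, put `Y = {· | (G^L)° for all G^L}` and `X = {· | Y}`. Left wins `X`
whoever starts, since she never has a move. In `G + X`, however, Right moves to `G + Y`; Left must
then play some `G^L + Y`, and Right answers with `G^L + (G^L)°`, a P-position with Left to move.
So `G + X` and `X` have different outcomes. A Right option of `G` is handled symmetrically.
-/

namespace SetTheory.PGame

instance inst_s3 : Zero PGame := ⟨⟨PEmpty, PEmpty, PEmpty.elim, PEmpty.elim⟩⟩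

end SetTheory.PGame

namespace Misere

open SetTheory PGame

universe u

theorem leftFirst_iff (G : PGame) :
    LeftFirst G ↔ IsEmpty G.LeftMoves ∨ ∃ i, ¬RightFirst (G.moveLeft i) := by
  cases G; rfl

theorem rightFirst_iff (G : PGame) :
    RightFirst G ↔ IsEmpty G.RightMoves ∨ ∃ j, ¬LeftFirst (G.moveRight j) := by
  cases G; rfl

theorem leftFirst_add_iff (x y : PGame) :
    LeftFirst (x + y) ↔ IsEmpty x.LeftMoves ∧ IsEmpty y.LeftMoves ∨
      (∃ i, ¬RightFirst (x.moveLeft i + y)) ∨ ∃ i, ¬RightFirst (x + y.moveLeft i) := by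
  cases x; cases y
  rw [leftFirst_iff]
  exact or_congr isEmpty_sum Sum.exists

theorem rightFirst_add_iff (x y : PGame) :
    RightFirst (x + y) ↔ IsEmpty x.RightMoves ∧ IsEmpty y.RightMoves ∨
      (∃ j, ¬LeftFirst (x.moveRight j + y)) ∨ ∃ j, ¬LeftFirst (x + y.moveRight j) := by
  cases x; cases y
  rw [rightFirst_iff]
  exact or_congr isEmpty_sum Sum.exists

theorem misereOutcome_eq_L_iff (G : PGame) :
    misereOutcome G = .L ↔ LeftFirst G ∧ ¬RightFirst G := by
  unfold misereOutcome LeftFirst RightFirst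
  split_ifs <;> simp_all

theorem misereOutcome_eq_R_iff (G : PGame) :
    misereOutcome G = .R ↔ ¬LeftFirst G ∧ RightFirst G := by
  unfold misereOutcome LeftFirst RightFirst
  split_ifs <;> simp_all

theorem misereOutcome_eq_P_iff (G : PGame) :
    misereOutcome G = .P ↔ ¬LeftFirst G ∧ ¬RightFirst G := by
  unfold misereOutcome LeftFirst RightFirst
  split_ifs <;> simp_all

/-- The index `ULift (PLift (IsEmpty β))` has an element exactly when `G` has no Right option;
it supplies the extra Left option `0` of `G°`, and dually for Right. -/
noncomputable def adjoint : PGame.{u} → PGame.{u}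
  | ⟨α, β, L, R⟩ =>
    ⟨β ⊕ ULift (PLift (IsEmpty β)), α ⊕ ULift (PLift (IsEmpty α)),
      Sum.elim (fun j => adjoint (R j)) fun _ => 0, Sum.elim (fun i => adjoint (L i)) fun _ => 0⟩

theorem misereOutcome_add_adjoint (G : PGame) : misereOutcome (G + adjoint G) = .P := by
  induction G with
  | mk α β L R ihL ihR =>
    simp only [misereOutcome_eq_P_iff] at ihL ihR ⊢
    constructor
    · rw [leftFirst_add_iff]
      rintro (⟨-, hadj⟩ | ⟨i, hi⟩ | ⟨j | ⟨⟨⟨hβ⟩⟩⟩, hj⟩)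
      · obtain ⟨hβ, hzero⟩ := isEmpty_sum.mp hadj
        exact hzero.false ⟨⟨hβ⟩⟩
      · exact hi ((rightFirst_add_iff _ _).2 (.inr (.inr ⟨.inl i, (ihL i).1⟩)))
      · exact hj ((rightFirst_add_iff _ _).2 (.inr (.inl ⟨j, (ihR j).1⟩)))
      · exact hj ((rightFirst_add_iff _ _).2 (.inl ⟨hβ, inferInstanceAs (IsEmpty PEmpty)⟩))
    · rw [rightFirst_add_iff]
      rintro (⟨-, hadj⟩ | ⟨j, hj⟩ | ⟨i | ⟨⟨⟨hα⟩⟩⟩, hi⟩)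
      · obtain ⟨hα, hzero⟩ := isEmpty_sum.mp hadj
        exact hzero.false ⟨⟨hα⟩⟩
      · exact hj ((leftFirst_add_iff _ _).2 (.inr (.inr ⟨.inl j, (ihR j).2⟩)))
      · exact hi ((leftFirst_add_iff _ _).2 (.inr (.inl ⟨i, (ihL i).2⟩)))
      · exact hi ((leftFirst_add_iff _ _).2 (.inl ⟨hα, inferInstanceAs (IsEmpty PEmpty)⟩))

theorem exists_misereOutcome_eq_L_and_rightFirst_add {G : PGame.{u}}
    (hG : Nonempty G.LeftMoves) : ∃ X : PGame.{u}, misereOutcome X = .L ∧ RightFirst (G + X) := by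
  let Y : PGame.{u} := ⟨PEmpty, G.LeftMoves, PEmpty.elim, fun i => adjoint (G.moveLeft i)⟩
  have hY : LeftFirst Y := (leftFirst_iff Y).2 (.inl (inferInstanceAs (IsEmpty PEmpty)))
  have hGY : ¬LeftFirst (G + Y) := by
    rw [leftFirst_add_iff]
    rintro (⟨hG', -⟩ | ⟨i, hi⟩ | ⟨⟨⟩, -⟩)
    · exact not_isEmpty_of_nonempty _ hG'
    · have hP := (misereOutcome_eq_P_iff _).1 (misereOutcome_add_adjoint (G.moveLeft i))
      exact hi ((rightFirst_add_iff _ _).2 (.inr (.inr ⟨i, hP.1⟩)))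
  refine ⟨⟨PEmpty, PUnit, PEmpty.elim, fun _ => Y⟩, ?_, ?_⟩
  · rw [misereOutcome_eq_L_iff, leftFirst_iff, rightFirst_iff]
    refine ⟨.inl (inferInstanceAs (IsEmpty PEmpty)), ?_⟩
    rintro (hempty | ⟨_, hj⟩)
    exacts [hempty.false PUnit.unit, hj hY]
  · exact (rightFirst_add_iff _ _).2 (.inr (.inr ⟨PUnit.unit, hGY⟩))

theorem exists_misereOutcome_eq_R_and_leftFirst_add {G : PGame.{u}}
    (hG : Nonempty G.RightMoves) : ∃ X : PGame.{u}, misereOutcome X = .R ∧ LeftFirst (G + X) := by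
  let Y : PGame.{u} := ⟨G.RightMoves, PEmpty, fun j => adjoint (G.moveRight j), PEmpty.elim⟩
  have hY : RightFirst Y := (rightFirst_iff Y).2 (.inl (inferInstanceAs (IsEmpty PEmpty)))
  have hGY : ¬RightFirst (G + Y) := by
    rw [rightFirst_add_iff]
    rintro (⟨hG', -⟩ | ⟨j, hj⟩ | ⟨⟨⟩, -⟩)
    · exact not_isEmpty_of_nonempty _ hG'
    · have hP := (misereOutcome_eq_P_iff _).1 (misereOutcome_add_adjoint (G.moveRight j))
      exact hj ((leftFirst_add_iff _ _).2 (.inr (.inr ⟨j, hP.2⟩)))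
  refine ⟨⟨PUnit, PEmpty, fun _ => Y, PEmpty.elim⟩, ?_, ?_⟩
  · rw [misereOutcome_eq_R_iff, leftFirst_iff, rightFirst_iff]
    refine ⟨?_, .inl (inferInstanceAs (IsEmpty PEmpty))⟩
    rintro (hempty | ⟨_, hi⟩)
    exacts [hempty.false PUnit.unit, hi hY]
  · exact (leftFirst_add_iff _ _).2 (.inr (.inr ⟨PUnit.unit, hGY⟩))

end Misere

open Misere in
/-- the only game equivalent to 0 modulo all games under misère play is
(a game identical in form to) the zero game {·|·}. -/
theorem eq_zero_iff_zero (G : PGame)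
    (h : ∀ X : PGame, misereOutcome (G + X) = misereOutcome X) :
    IsEmpty G.LeftMoves ∧ IsEmpty G.RightMoves := by
  simp only [← not_nonempty_iff]
  constructor
  · intro hL
    obtain ⟨X, hX, hGX⟩ := exists_misereOutcome_eq_L_and_rightFirst_add hL
    exact ((misereOutcome_eq_L_iff _).1 ((h X).trans hX)).2 hGX
  · intro hR
    obtain ⟨X, hX, hGX⟩ := exists_misereOutcome_eq_R_and_leftFirst_add hR
    exact ((misereOutcome_eq_R_iff _).1 ((h X).trans hX)).1 hGX
end

section
/- Hand-tying principle for misère play: if G and H are games with H^L nonempty, G^R = H^R, and H^L ⊆ G^L (G is obtained from H by adding extra Left options to an already nonempty set of Left options), then G ≥ H under misère play, i.e., o⁻(G + X) ≥ o⁻(H + X) for all games X. -/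
open SetTheory

/-!
Induct on `X`. Every move available to Left in `H + X` is still available in `G + X`, and
Right has exactly the same moves in both. The one way extra options could hurt Left in misère
play, by forcing her to move where she would otherwise have none, cannot arise: `H` already
has a Left option, so Left is never out of moves in `H + X`.
-/

namespace Misere

universe u

open PGame

theorem mk_add_mk {α β γ δ : Type u} (L : α → PGame) (R : β → PGame) (XL : γ → PGame)
    (XR : δ → PGame) :
    mk α β L R + mk γ δ XL XR =
      mk (α ⊕ γ) (β ⊕ δ) (Sum.elim (fun i => L i + mk γ δ XL XR) (fun k => mk α β L R + XL k))
        (Sum.elim (fun j => R j + mk γ δ XL XR) (fun k => mk α β L R + XR k)) :=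
  rfl

theorem leftFirst_mk {α β : Type u} (L : α → PGame) (R : β → PGame) :
    LeftFirst (mk α β L R) ↔ IsEmpty α ∨ ∃ i, ¬ RightFirst (L i) := by
  rw [LeftFirst, wins]
  rfl

theorem rightFirst_mk {α β : Type u} (L : α → PGame) (R : β → PGame) :
    RightFirst (mk α β L R) ↔ IsEmpty β ∨ ∃ j, ¬ LeftFirst (R j) := by
  rw [RightFirst, wins]
  rfl

theorem misereOutcome_le_of {G H : PGame} (hL : LeftFirst G → LeftFirst H)
    (hR : RightFirst H → RightFirst G) : misereOutcome G ≤ misereOutcome H := by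
  unfold misereOutcome
  by_cases a : LeftFirst G <;> by_cases b : RightFirst G <;>
    by_cases c : LeftFirst H <;> by_cases d : RightFirst H <;>
    simp_all [LeftFirst, RightFirst, LE.le]

theorem leftFirst_imp_and_rightFirst_imp_of_leftOptions_subset {α α' β : Type u}
    [Nonempty α] (L : α → PGame) (L' : α' → PGame) (R : β → PGame)
    (hsub : ∀ i, ∃ i', L' i' = L i) (X : PGame) :
    (LeftFirst (mk α β L R + X) → LeftFirst (mk α' β L' R + X)) ∧
      (RightFirst (mk α' β L' R + X) → RightFirst (mk α β L R + X)) := by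
  induction X with
  | mk γ δ XL XR ihL ihR =>
    simp only [mk_add_mk, leftFirst_mk, rightFirst_mk, Sum.exists, Sum.elim_inl, Sum.elim_inr]
    constructor
    · rintro (hempty | ⟨i, hi⟩ | ⟨k, hk⟩)
      · exact (hempty.false (Sum.inl (Classical.arbitrary α))).elim
      · obtain ⟨i', hi'⟩ := hsub i
        exact Or.inr (Or.inl ⟨i', by rwa [hi']⟩)
      · exact Or.inr (Or.inr ⟨k, mt (ihL k).2 hk⟩)
    · rintro (hempty | ⟨j, hj⟩ | ⟨k, hk⟩)
      · exact Or.inl hempty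
      · exact Or.inr (Or.inl ⟨j, hj⟩)
      · exact Or.inr (Or.inr ⟨k, mt (ihR k).1 hk⟩)

end Misere

open Misere in
/-- hand-tying principle for misère play. If `G` is obtained from `H` by
adding extra Left options to an already nonempty set of Left options, then `G ≥ H`
under misère play. -/
theorem hand_tying {α β γ : Type u} (L : α → PGame) (L' : γ → PGame) (R : β → PGame)
    (hα : Nonempty α) :
    ∀ X : PGame, misereOutcome (PGame.mk α β L R + X) ≤
      misereOutcome (PGame.mk (α ⊕ γ) β (Sum.elim L L') R + X) := by
  intro X
  obtain ⟨hL, hR⟩ := leftFirst_imp_and_rightFirst_imp_of_leftOptions_subset L (Sum.elim L L') R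
    (fun i => ⟨Sum.inl i, rfl⟩) X
  exact misereOutcome_le_of hL hR
end

section
/- In any universe of dicot games closed under sum and followers, * + * ≡ 0; that is, for every dicot game X, o⁻(* + * + X) = o⁻(X). -/
namespace SetTheory

universe u

namespace PGame

/-- The pre-game `Zero` is defined by `0 = { | }`. -/
instance : Zero PGame :=
  ⟨⟨PEmpty, PEmpty, PEmpty.elim, PEmpty.elim⟩⟩

/-- The pre-game `star`, which is fuzzy with zero. -/
def star : PGame.{u} :=
  ⟨PUnit, PUnit, fun _ => 0, fun _ => 0⟩

end PGame

end SetTheory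

open SetTheory

/-! Both options of `* + *` for either player are relabellings of `*`, so Left's first moves in
`* + * + X` are to `* + X` and to `* + * + Xᴸ`, and the latter behave like `Xᴸ` by induction.
The move to `* + X` does not change Left's outcome: if Left loses `X` moving first, Right answers
it by `* → 0`; and it wins when `X` has no Left option, since then `X` has no option at all
(dicot), so Right's only reply `* → 0` leaves Left without a move. Right's side is symmetric. -/

namespace SetTheory.PGame

theorem mk_add_mk {xl xr yl yr : Type u} (xL : xl → PGame) (xR : xr → PGame) (yL : yl → PGame)
    (yR : yr → PGame) :
    mk xl xr xL xR + mk yl yr yL yR =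
      mk (xl ⊕ yl) (xr ⊕ yr)
        (Sum.elim (fun i => xL i + mk yl yr yL yR) fun j => mk xl xr xL xR + yL j)
        (Sum.elim (fun i => xR i + mk yl yr yL yR) fun j => mk xl xr xL xR + yR j) := by
  rfl

inductive Relabelling : PGame.{u} → PGame.{u} → Prop
  | mk {x y : PGame} (L : x.LeftMoves ≃ y.LeftMoves) (R : x.RightMoves ≃ y.RightMoves) :
      (∀ i, Relabelling (x.moveLeft i) (y.moveLeft (L i))) →
      (∀ j, Relabelling (x.moveRight j) (y.moveRight (R j))) → Relabelling x y

infix:50 " ≡r " => Relabelling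

theorem Relabelling.refl (x : PGame) : x ≡r x := by
  induction x with
  | mk xl xr xL xR ihL ihR => exact .mk (.refl _) (.refl _) ihL ihR

theorem Relabelling.add_congr {w x y z : PGame} (h₁ : w ≡r x) (h₂ : y ≡r z) : w + y ≡r x + z := by
  induction h₁ generalizing y z with
  | @mk w x L₁ R₁ _ _ ihL₁ ihR₁ =>
    induction h₂ with
    | @mk y z L₂ R₂ hL₂ hR₂ ihL₂ ihR₂ =>
      cases w; cases x; cases y; cases z
      rw [mk_add_mk, mk_add_mk]
      refine .mk (L₁.sumCongr L₂) (R₁.sumCongr R₂) ?_ ?_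
      · rintro (i | i)
        · exact ihL₁ i (.mk L₂ R₂ hL₂ hR₂)
        · exact ihL₂ i
      · rintro (j | j)
        · exact ihR₁ j (.mk L₂ R₂ hL₂ hR₂)
        · exact ihR₂ j

theorem zero_add_relabelling (x : PGame) : 0 + x ≡r x := by
  induction x with
  | mk xl xr xL xR ihL ihR =>
    refine .mk (Equiv.emptySum PEmpty xl) (Equiv.emptySum PEmpty xr) ?_ ?_
    · rintro (⟨⟨⟩⟩ | i)
      exact ihL i
    · rintro (⟨⟨⟩⟩ | j)
      exact ihR j

theorem add_zero_relabelling (x : PGame) : x + 0 ≡r x := by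
  induction x with
  | mk xl xr xL xR ihL ihR =>
    refine .mk (Equiv.sumEmpty xl PEmpty) (Equiv.sumEmpty xr PEmpty) ?_ ?_
    · rintro (i | ⟨⟨⟩⟩)
      exact ihL i
    · rintro (j | ⟨⟨⟩⟩)
      exact ihR j

end SetTheory.PGame

namespace Misere

open PGame

theorem wins_fst_iff (G : PGame) :
    (wins G).1 ↔ IsEmpty G.LeftMoves ∨ ∃ i, ¬ (wins (G.moveLeft i)).2 := by
  cases G; rfl

theorem wins_snd_iff (G : PGame) :
    (wins G).2 ↔ IsEmpty G.RightMoves ∨ ∃ j, ¬ (wins (G.moveRight j)).1 := by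
  cases G; rfl

theorem wins_add_fst_iff (G H : PGame) :
    (wins (G + H)).1 ↔ (IsEmpty G.LeftMoves ∧ IsEmpty H.LeftMoves) ∨
      (∃ i, ¬ (wins (G.moveLeft i + H)).2) ∨ ∃ i, ¬ (wins (G + H.moveLeft i)).2 := by
  cases G; cases H
  rw [mk_add_mk, wins_fst_iff]
  exact or_congr isEmpty_sum Sum.exists

theorem wins_add_snd_iff (G H : PGame) :
    (wins (G + H)).2 ↔ (IsEmpty G.RightMoves ∧ IsEmpty H.RightMoves) ∨
      (∃ j, ¬ (wins (G.moveRight j + H)).1) ∨ ∃ j, ¬ (wins (G + H.moveRight j)).1 := by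
  cases G; cases H
  rw [mk_add_mk, wins_snd_iff]
  exact or_congr isEmpty_sum Sum.exists

theorem wins_eq_of_relabelling {G H : PGame} (h : G ≡r H) : wins G = wins H := by
  induction h with
  | mk L R _ _ ihL ihR =>
    refine Prod.ext (propext ?_) (propext ?_)
    · rw [wins_fst_iff, wins_fst_iff, L.isEmpty_congr, ← L.exists_congr_right]
      simp only [ihL]
    · rw [wins_snd_iff, wins_snd_iff, R.isEmpty_congr, ← R.exists_congr_right]
      simp only [ihR]

theorem wins_zero_add (G : PGame) : wins (0 + G) = wins G :=
  wins_eq_of_relabelling (zero_add_relabelling G)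

theorem wins_add_fst_iff_of_relabelling_moveLeft {A B : PGame} [Nonempty A.LeftMoves]
    (hA : ∀ i, A.moveLeft i ≡r B) (G : PGame) :
    (wins (A + G)).1 ↔ ¬ (wins (B + G)).2 ∨ ∃ i, ¬ (wins (A + G.moveLeft i)).2 := by
  have hB i : wins (A.moveLeft i + G) = wins (B + G) :=
    wins_eq_of_relabelling ((hA i).add_congr (.refl G))
  simp only [wins_add_fst_iff, hB, not_isEmpty_of_nonempty, false_and, false_or, exists_const]

theorem wins_add_snd_iff_of_relabelling_moveRight {A B : PGame} [Nonempty A.RightMoves]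
    (hA : ∀ j, A.moveRight j ≡r B) (G : PGame) :
    (wins (A + G)).2 ↔ ¬ (wins (B + G)).1 ∨ ∃ j, ¬ (wins (A + G.moveRight j)).1 := by
  have hB j : wins (A.moveRight j + G) = wins (B + G) :=
    wins_eq_of_relabelling ((hA j).add_congr (.refl G))
  simp only [wins_add_snd_iff, hB, not_isEmpty_of_nonempty, false_and, false_or, exists_const]

instance : Nonempty star.LeftMoves := ⟨PUnit.unit⟩
instance : Nonempty star.RightMoves := ⟨PUnit.unit⟩
instance : Nonempty (star + star).LeftMoves := ⟨Sum.inl PUnit.unit⟩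
instance : Nonempty (star + star).RightMoves := ⟨Sum.inl PUnit.unit⟩

theorem wins_star_add_snd_iff (G : PGame) :
    (wins (star + G)).2 ↔ ¬ (wins G).1 ∨ ∃ j, ¬ (wins (star + G.moveRight j)).1 := by
  rw [wins_add_snd_iff_of_relabelling_moveRight (A := star) (fun _ => .refl 0), wins_zero_add]

theorem wins_star_add_fst_iff (G : PGame) :
    (wins (star + G)).1 ↔ ¬ (wins G).2 ∨ ∃ i, ¬ (wins (star + G.moveLeft i)).2 := by
  rw [wins_add_fst_iff_of_relabelling_moveLeft (A := star) (fun _ => .refl 0), wins_zero_add]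

theorem star_add_star_moveLeft_relabelling (i : (star + star).LeftMoves) :
    (star + star).moveLeft i ≡r star := by
  rcases i with ⟨⟩ | ⟨⟩
  · exact zero_add_relabelling star
  · exact add_zero_relabelling star

theorem star_add_star_moveRight_relabelling (j : (star + star).RightMoves) :
    (star + star).moveRight j ≡r star := by
  rcases j with ⟨⟩ | ⟨⟩
  · exact zero_add_relabelling star
  · exact add_zero_relabelling star

theorem wins_fst_iff_star_add {X : PGame} (hX : IsEmpty X.LeftMoves → IsEmpty X.RightMoves) :
    (wins X).1 ↔ ¬ (wins (star + X)).2 ∨ ∃ i, ¬ (wins (X.moveLeft i)).2 := by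
  rw [wins_star_add_snd_iff]
  constructor
  · intro h
    rcases (wins_fst_iff X).1 h with hl | hi
    · exact Or.inl fun | .inl h' => h' h | .inr ⟨j, _⟩ => (hX hl).false j
    · exact Or.inr hi
  · rintro (h | hi)
    · exact not_not.1 fun h' => h (Or.inl h')
    · exact (wins_fst_iff X).2 (Or.inr hi)

theorem wins_snd_iff_star_add {X : PGame} (hX : IsEmpty X.RightMoves → IsEmpty X.LeftMoves) :
    (wins X).2 ↔ ¬ (wins (star + X)).1 ∨ ∃ j, ¬ (wins (X.moveRight j)).1 := by
  rw [wins_star_add_fst_iff]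
  constructor
  · intro h
    rcases (wins_snd_iff X).1 h with hr | hj
    · exact Or.inl fun | .inl h' => h' h | .inr ⟨i, _⟩ => (hX hr).false i
    · exact Or.inr hj
  · rintro (h | hj)
    · exact not_not.1 fun h' => h (Or.inl h')
    · exact (wins_snd_iff X).2 (Or.inr hj)

theorem wins_star_add_star_add {X : PGame} (hX : Dicot X) : wins (star + star + X) = wins X := by
  induction X with
  | mk xl xr xL xR ihL ihR =>
    obtain ⟨hEnd, hL, hR⟩ := hX
    set X := mk xl xr xL xR
    have ihL' (i : X.LeftMoves) : wins (star + star + X.moveLeft i) = wins (X.moveLeft i) :=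
      ihL i (hL i)
    have ihR' (j : X.RightMoves) : wins (star + star + X.moveRight j) = wins (X.moveRight j) :=
      ihR j (hR j)
    refine Prod.ext (propext ?_) (propext ?_)
    · rw [wins_add_fst_iff_of_relabelling_moveLeft star_add_star_moveLeft_relabelling,
        wins_fst_iff_star_add (X := X) hEnd.1]
      simp only [ihL']
    · rw [wins_add_snd_iff_of_relabelling_moveRight star_add_star_moveRight_relabelling,
        wins_snd_iff_star_add (X := X) hEnd.2]
      simp only [ihR']

end Misere

open Misere in
/-- `* + * ≡ 0` modulo the universe of dicot games. -/
theorem star_add_star_equiv_zero :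
    ∀ X : PGame, Dicot X →
      misereOutcome (PGame.star + PGame.star + X) = misereOutcome X := by
  intro X hX
  rw [misereOutcome, misereOutcome, wins_star_add_star_add hX]
end

section
/- For every pair of outcome classes (C1, C2) with C1, C2 ∈ {L, R, N, P}, there exists a game G whose normal-play outcome is C1 and whose misère-play outcome is C2. -/
universe u

open SetTheory

/-! A game's two outcomes are determined by four independent bits: whether Left, moving first,
wins under normal and under misère play (which depends only on the Left options), and the same
two bits for Right (which depend only on the Right options). So it suffices to exhibit, for each
of the four values of Left's pair, a list of Left options realizing it, and symmetrically for
Right; `{0, -1 | }`, `{ | 0, 1}` and the ends `0`, `1`, `-1` are enough. -/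

lemma exists_ulift_fin_iff_exists_mem {α : Type*} (l : List α) (p : α → Prop) :
    (∃ i : ULift.{u} (Fin l.length), p l[i.down]) ↔ ∃ x ∈ l, p x := by
  rw [List.exists_mem_iff_getElem]
  exact ⟨fun ⟨i, h⟩ => ⟨i.down, i.down.isLt, h⟩, fun ⟨i, hi, h⟩ => ⟨⟨⟨i, hi⟩⟩, h⟩⟩

lemma isEmpty_ulift_fin_length_iff {α : Type*} (l : List α) :
    IsEmpty (ULift.{u} (Fin l.length)) ↔ l = [] := by
  rw [isEmpty_ulift, ← not_nonempty_iff, ← Fin.pos_iff_nonempty, List.length_pos_iff, not_not]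

namespace SetTheory.PGame

def ofLists (Ls Rs : List PGame.{u}) : PGame.{u} :=
  mk (ULift (Fin Ls.length)) (ULift (Fin Rs.length)) (fun i => Ls[i.down]) (fun j => Rs[j.down])

def zero : PGame.{u} := ofLists [] []

def one : PGame.{u} := ofLists [zero] []

def negOne : PGame.{u} := ofLists [] [zero]

end SetTheory.PGame

namespace Misere

open PGame

@[simp] lemma nwins_ofLists (Ls Rs : List PGame.{u}) :
    nwins (ofLists Ls Rs) = (∃ G ∈ Ls, ¬(nwins G).2, ∃ G ∈ Rs, ¬(nwins G).1) := by
  simp only [ofLists, nwins, exists_ulift_fin_iff_exists_mem Ls (fun G => ¬(nwins G).2),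
    exists_ulift_fin_iff_exists_mem Rs (fun G => ¬(nwins G).1)]

@[simp] lemma wins_ofLists (Ls Rs : List PGame.{u}) :
    wins (ofLists Ls Rs) =
      (Ls = [] ∨ ∃ G ∈ Ls, ¬(wins G).2, Rs = [] ∨ ∃ G ∈ Rs, ¬(wins G).1) := by
  simp only [ofLists, wins, exists_ulift_fin_iff_exists_mem Ls (fun G => ¬(wins G).2),
    exists_ulift_fin_iff_exists_mem Rs (fun G => ¬(wins G).1), isEmpty_ulift_fin_length_iff]

def leftOptionsFor : Bool → Bool → List PGame.{u}
  | false, false => [ofLists [] [zero, one]]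
  | false, true => []
  | true, false => [zero]
  | true, true => [zero, negOne]

def rightOptionsFor : Bool → Bool → List PGame.{u}
  | false, false => [ofLists [zero, negOne] []]
  | false, true => []
  | true, false => [zero]
  | true, true => [zero, one]

section

variable (a b : Bool) (Ls Rs : List PGame.{u})

lemma nwins_fst_ofLists_leftOptionsFor : (nwins (ofLists (leftOptionsFor a b) Rs)).1 ↔ a := by
  cases a <;> cases b <;> simp [leftOptionsFor, zero, one, negOne]

lemma wins_fst_ofLists_leftOptionsFor : (wins (ofLists (leftOptionsFor a b) Rs)).1 ↔ b := by
  cases a <;> cases b <;> simp [leftOptionsFor, zero, one, negOne]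

lemma nwins_snd_ofLists_rightOptionsFor : (nwins (ofLists Ls (rightOptionsFor a b))).2 ↔ a := by
  cases a <;> cases b <;> simp [rightOptionsFor, zero, one, negOne]

lemma wins_snd_ofLists_rightOptionsFor : (wins (ofLists Ls (rightOptionsFor a b))).2 ↔ b := by
  cases a <;> cases b <;> simp [rightOptionsFor, zero, one, negOne]

end

theorem exists_nwins_wins_iff (a b c d : Bool) :
    ∃ G : PGame.{u}, ((nwins G).1 ↔ a) ∧ ((nwins G).2 ↔ c) ∧ ((wins G).1 ↔ b) ∧ ((wins G).2 ↔ d) :=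
  ⟨ofLists (leftOptionsFor a b) (rightOptionsFor c d),
    nwins_fst_ofLists_leftOptionsFor .., nwins_snd_ofLists_rightOptionsFor ..,
    wins_fst_ofLists_leftOptionsFor .., wins_snd_ofLists_rightOptionsFor ..⟩

def Outcome.leftWinsFirst : Outcome → Bool
  | .L | .N => true
  | .R | .P => false

def Outcome.rightWinsFirst : Outcome → Bool
  | .R | .N => true
  | .L | .P => false

open Classical in
lemma outcome_ite_eq_iff (p q : Prop) (o : Outcome) :
    (if p then (if q then Outcome.N else .L) else (if q then .R else .P)) = o ↔
      (p ↔ o.leftWinsFirst) ∧ (q ↔ o.rightWinsFirst) := by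
  cases o <;> by_cases p <;> by_cases q <;> simp_all [Outcome.leftWinsFirst, Outcome.rightWinsFirst]

lemma normalOutcome_eq_iff (G : PGame) (o : Outcome) :
    normalOutcome G = o ↔ ((nwins G).1 ↔ o.leftWinsFirst) ∧ ((nwins G).2 ↔ o.rightWinsFirst) :=
  outcome_ite_eq_iff ..

lemma misereOutcome_eq_iff (G : PGame) (o : Outcome) :
    misereOutcome G = o ↔ ((wins G).1 ↔ o.leftWinsFirst) ∧ ((wins G).2 ↔ o.rightWinsFirst) :=
  outcome_ite_eq_iff ..

end Misere

open Misere in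
/-- every pair of outcome classes is realized as the normal-play and
misère-play outcomes of a single game. -/
theorem all_outcome_pairs_realized (C1 C2 : Outcome) :
    ∃ G : PGame, normalOutcome G = C1 ∧ misereOutcome G = C2 := by
  obtain ⟨G, hnL, hnR, hmL, hmR⟩ := exists_nwins_wins_iff
    C1.leftWinsFirst C2.leftWinsFirst C1.rightWinsFirst C2.rightWinsFirst
  exact ⟨G, (normalOutcome_eq_iff G C1).2 ⟨hnL, hnR⟩, (misereOutcome_eq_iff G C2).2 ⟨hmL, hmR⟩⟩
end
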